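/- Let E be a real inner product space, J : E → ℝ differentiable with gradient ∇J that is L-Lipschitz (L > 0), and J bounded below by J_inf. Let (Ω, 𝒜, P) be a probability space with filtration (𝓕_t)_{t∈ℕ}, and let (W_t)_{t≥0}, (G_t)_{t≥0} be E-valued random variables such that W_t is 𝓕_t-measurable, W_{t+1} = W_t − η·G_t for a fixed η ∈ (0, 1/L], and almost surely E[G_t | 𝓕_t] = ∇J(W_t) and E[‖G_t − ∇J(W_t)‖² | 𝓕_t] ≤ σ², with J(W_t) and ‖G_t‖² integrable for all t. Then for every integer T ≥ 1: (1/T)·Σ_{t=0}^{T−1} E[‖∇J(W_t)‖²] ≤ 2·(E[J(W_0)] − J_inf)/(η·T) + L·η·σ². -/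

import Mathlib

/-! The descent lemma `J y ≤ J x + ⟪∇J x, y - x⟫ + (L/2) ‖y - x‖²`, applied to one SGD step and
integrated, gives `E J(W_{t+1}) ≤ E J(W_t) - η E⟪∇J(W_t), G_t⟫ + (L η²/2) E‖G_t‖²`. Since `∇J(W_t)`
is `𝓕_t`-measurable, unbiasedness turns the cross term into `E‖∇J(W_t)‖²` and splits `E‖G_t‖²`
into the variance (at most `σ²`) plus `E‖∇J(W_t)‖²`; as `L η ≤ 1`, each step therefore decreases
`E J(W_t)` by at least `(η/2) E‖∇J(W_t)‖² - L η² σ²/2`. Summing over `t < T` telescopes, and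
`J ≥ J_inf` bounds the final term. Square integrability of `∇J(W_t)` comes from
`‖∇J x‖² ≤ 2 L (J x - J_inf)`. -/

open MeasureTheory Set
open scoped RealInnerProductSpace

section Smooth

variable {E : Type*} [NormedAddCommGroup E] [InnerProductSpace ℝ E] [CompleteSpace E]
  {J : E → ℝ} {L : ℝ}

theorem Differentiable.hasDerivAt_comp_add_smul (hJ : Differentiable ℝ J) (x v : E) (t : ℝ) :
    HasDerivAt (fun s : ℝ => J (x + s • v)) ⟪gradient J (x + t • v), v⟫ t := by
  have hline : HasDerivAt (fun s : ℝ => x + s • v) v t := by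
    simpa using ((hasDerivAt_id t).smul_const v).const_add x
  simpa [Function.comp_def] using
    (hasGradientAt_iff_hasFDerivAt.mp (hJ _).hasGradientAt).comp_hasDerivAt t hline

theorem le_add_inner_gradient_add_sq (hJ : Differentiable ℝ J)
    (hlip : ∀ x y, ‖gradient J x - gradient J y‖ ≤ L * ‖x - y‖) (x y : E) :
    J y ≤ J x + ⟪gradient J x, y - x⟫ + L / 2 * ‖y - x‖ ^ 2 := by
  set v := y - x
  set g : ℝ → ℝ := fun s => J (x + s • v) - s * ⟪gradient J x, v⟫ - L * ‖v‖ ^ 2 / 2 * s ^ 2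
  have hg : ∀ s, HasDerivAt g (⟪gradient J (x + s • v) - gradient J x, v⟫ - L * ‖v‖ ^ 2 * s) s := by
    intro s
    have hquad := (hasDerivAt_pow 2 s).const_mul (L * ‖v‖ ^ 2 / 2)
    refine (((hJ.hasDerivAt_comp_add_smul x v s).sub
      ((hasDerivAt_id s).mul_const ⟪gradient J x, v⟫)).sub hquad).congr_deriv ?_
    rw [inner_sub_left]
    ring
  have hg_nonpos : ∀ s ∈ interior (Icc (0 : ℝ) 1),
      ⟪gradient J (x + s • v) - gradient J x, v⟫ - L * ‖v‖ ^ 2 * s ≤ 0 := by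
    intro s hs
    rw [interior_Icc] at hs
    have hgrad : ‖gradient J (x + s • v) - gradient J x‖ ≤ L * (s * ‖v‖) := by
      simpa [norm_smul, abs_of_pos hs.1] using hlip (x + s • v) x
    nlinarith [real_inner_le_norm (gradient J (x + s • v) - gradient J x) v, norm_nonneg v]
  have hanti : AntitoneOn g (Icc 0 1) :=
    antitoneOn_of_hasDerivWithinAt_nonpos (convex_Icc 0 1)
      (fun s _ => (hg s).continuousAt.continuousWithinAt)
      (fun s _ => (hg s).hasDerivWithinAt) hg_nonpos
  have h01 := hanti (left_mem_Icc.mpr zero_le_one) (right_mem_Icc.mpr zero_le_one) zero_le_one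
  simp only [g, zero_smul, one_smul, add_zero, v, add_sub_cancel] at h01
  linarith

theorem norm_gradient_sq_le (hL : 0 < L) (hJ : Differentiable ℝ J)
    (hlip : ∀ x y, ‖gradient J x - gradient J y‖ ≤ L * ‖x - y‖) {Jinf : ℝ}
    (hbd : ∀ x, Jinf ≤ J x) (x : E) :
    ‖gradient J x‖ ^ 2 ≤ 2 * L * (J x - Jinf) := by
  have h := le_add_inner_gradient_add_sq hJ hlip x (x - L⁻¹ • gradient J x)
  rw [sub_sub_cancel_left, inner_neg_right, real_inner_smul_right, real_inner_self_eq_norm_sq,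
    norm_neg, norm_smul, Real.norm_of_nonneg (inv_nonneg.mpr hL.le)] at h
  have hlow := hbd (x - L⁻¹ • gradient J x)
  have hscale : L / 2 * (L⁻¹ * ‖gradient J x‖) ^ 2 = L⁻¹ * ‖gradient J x‖ ^ 2 / 2 := by
    field_simp
  have key : L⁻¹ * ‖gradient J x‖ ^ 2 ≤ 2 * (J x - Jinf) := by linarith
  calc ‖gradient J x‖ ^ 2 = L * (L⁻¹ * ‖gradient J x‖ ^ 2) := by field_simp
    _ ≤ L * (2 * (J x - Jinf)) := by gcongr
    _ = 2 * L * (J x - Jinf) := by ring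

theorem le_sub_inner_gradient_add_sq (hJ : Differentiable ℝ J)
    (hlip : ∀ x y, ‖gradient J x - gradient J y‖ ≤ L * ‖x - y‖) (x g : E) (η : ℝ) :
    J (x - η • g) ≤ J x - η * ⟪gradient J x, g⟫ + L * η ^ 2 / 2 * ‖g‖ ^ 2 := by
  have h := le_add_inner_gradient_add_sq hJ hlip x (x - η • g)
  rw [sub_sub_cancel_left, inner_neg_right, real_inner_smul_right, norm_neg, norm_smul,
    Real.norm_eq_abs, mul_pow, sq_abs] at h
  linarith

theorem lipschitzWith_gradient (hlip : ∀ x y, ‖gradient J x - gradient J y‖ ≤ L * ‖x - y‖) :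
    LipschitzWith L.toNNReal (gradient J) :=
  LipschitzWith.of_dist_le_mul fun x y => by
    rw [dist_eq_norm, dist_eq_norm]
    exact (hlip x y).trans (mul_le_mul_of_nonneg_right (Real.le_coe_toNNReal L) (norm_nonneg _))

end Smooth

section CondExp

variable {Ω E : Type*} [NormedAddCommGroup E] [InnerProductSpace ℝ E]
  {m mΩ : MeasurableSpace Ω} {μ : Measure Ω}

theorem integrable_inner_of_memLp_two {f g : Ω → E} (hf : MemLp f 2 μ) (hg : MemLp g 2 μ) :
    Integrable (fun ω => ⟪f ω, g ω⟫) μ :=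
  (L2.integrable_inner (𝕜 := ℝ) (hf.toLp f) (hg.toLp g)).congr <| by
    filter_upwards [hf.coeFn_toLp, hg.coeFn_toLp] with ω hfω hgω
    rw [hfω, hgω]

theorem integral_inner_condExp [CompleteSpace E] [IsFiniteMeasure μ] (hm : m ≤ mΩ) {f g : Ω → E}
    (hfm : AEStronglyMeasurable[m] f μ) (hf : MemLp f 2 μ) (hg : MemLp g 2 μ) :
    ∫ ω, ⟪f ω, (μ[g|m]) ω⟫ ∂μ = ∫ ω, ⟪f ω, g ω⟫ ∂μ := by
  have key := inner_condExpL2_eq_inner_fun (𝕜 := ℝ) hm (hg.toLp g) (hf.toLp f)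
    (hfm.congr hf.coeFn_toLp.symm)
  rw [L2.inner_def, L2.inner_def] at key
  calc ∫ ω, ⟪f ω, (μ[g|m]) ω⟫ ∂μ
      = ∫ ω, ⟪(condExpL2 E ℝ hm (hg.toLp g) : Ω → E) ω, (hf.toLp f : Ω → E) ω⟫ ∂μ := by
        refine integral_congr_ae ?_
        filter_upwards [hg.condExpL2_ae_eq_condExp (𝕜 := ℝ) hm, hf.coeFn_toLp] with ω hgω hfω
        rw [hgω, hfω, real_inner_comm]
    _ = ∫ ω, ⟪(hg.toLp g : Ω → E) ω, (hf.toLp f : Ω → E) ω⟫ ∂μ := key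
    _ = ∫ ω, ⟪f ω, g ω⟫ ∂μ := by
        refine integral_congr_ae ?_
        filter_upwards [hg.coeFn_toLp, hf.coeFn_toLp] with ω hgω hfω
        rw [hgω, hfω, real_inner_comm]

theorem integral_inner_eq_integral_norm_sq_of_condExp_ae_eq [CompleteSpace E] [IsFiniteMeasure μ]
    (hm : m ≤ mΩ) {f g : Ω → E} (hfm : AEStronglyMeasurable[m] f μ) (hf : MemLp f 2 μ)
    (hg : MemLp g 2 μ) (hcond : μ[g|m] =ᵐ[μ] f) :
    ∫ ω, ⟪f ω, g ω⟫ ∂μ = ∫ ω, ‖f ω‖ ^ 2 ∂μ := by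
  rw [← integral_inner_condExp hm hfm hf hg]
  refine integral_congr_ae ?_
  filter_upwards [hcond] with ω hω
  rw [hω, real_inner_self_eq_norm_sq]

theorem integral_norm_sq_eq_add_of_condExp_ae_eq [CompleteSpace E] [IsFiniteMeasure μ] (hm : m ≤ mΩ)
    {f g : Ω → E} (hfm : AEStronglyMeasurable[m] f μ) (hf : MemLp f 2 μ) (hg : MemLp g 2 μ)
    (hcond : μ[g|m] =ᵐ[μ] f) :
    ∫ ω, ‖g ω‖ ^ 2 ∂μ = ∫ ω, ‖g ω - f ω‖ ^ 2 ∂μ + ∫ ω, ‖f ω‖ ^ 2 ∂μ := by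
  have hcross := integral_inner_eq_integral_norm_sq_of_condExp_ae_eq hm hfm hf hg hcond
  have hsq : ∀ {h : Ω → E}, MemLp h 2 μ → Integrable (fun ω => ‖h ω‖ ^ 2) μ :=
    fun hh => (memLp_two_iff_integrable_sq_norm hh.1).mp hh
  have hexpand : (fun ω => ‖g ω - f ω‖ ^ 2)
      = fun ω => ‖g ω‖ ^ 2 - 2 * ⟪f ω, g ω⟫ + ‖f ω‖ ^ 2 := by
    ext ω
    rw [norm_sub_sq_real, real_inner_comm]
  have hinner := (integrable_inner_of_memLp_two hf hg).const_mul 2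
  have hsub : Integrable (fun ω => ‖g ω‖ ^ 2 - 2 * ⟪f ω, g ω⟫) μ := (hsq hg).sub hinner
  rw [hexpand, integral_add hsub (hsq hf), integral_sub (hsq hg) hinner,
    integral_const_mul, hcross]
  ring

theorem integral_le_of_ae_condExp_le [IsProbabilityMeasure μ] (hm : m ≤ mΩ) {X : Ω → ℝ} {c : ℝ}
    (h : ∀ᵐ ω ∂μ, (μ[X|m]) ω ≤ c) :
    ∫ ω, X ω ∂μ ≤ c := by
  rw [← integral_condExp hm]
  simpa using integral_mono_ae integrable_condExp (integrable_const c) h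

end CondExp

section Step

variable {Ω E : Type*} [NormedAddCommGroup E] [InnerProductSpace ℝ E] [CompleteSpace E]
  {m mΩ : MeasurableSpace Ω} {μ : Measure Ω} {J : E → ℝ} {L : ℝ}

theorem memLp_two_gradient_comp (hL : 0 < L) (hJ : Differentiable ℝ J)
    (hlip : ∀ x y, ‖gradient J x - gradient J y‖ ≤ L * ‖x - y‖) {Jinf : ℝ}
    (hbd : ∀ x, Jinf ≤ J x) [IsFiniteMeasure μ] {X : Ω → E} (hX : AEStronglyMeasurable X μ)
    (hJX : Integrable (fun ω => J (X ω)) μ) :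
    MemLp (fun ω => gradient J (X ω)) 2 μ := by
  have hmeas : AEStronglyMeasurable (fun ω => gradient J (X ω)) μ :=
    (lipschitzWith_gradient hlip).continuous.comp_aestronglyMeasurable hX
  refine (memLp_two_iff_integrable_sq_norm hmeas).mpr <|
    ((hJX.sub (integrable_const Jinf)).const_mul (2 * L)).mono' (hmeas.norm.pow 2) ?_
  refine Filter.Eventually.of_forall fun ω => ?_
  rw [Real.norm_of_nonneg (by positivity)]
  exact norm_gradient_sq_le hL hJ hlip hbd (X ω)

theorem integral_norm_gradient_sq_le_of_sgd_step [IsFiniteMeasure μ] (hm : m ≤ mΩ)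
    (hJ : Differentiable ℝ J) (hlip : ∀ x y, ‖gradient J x - gradient J y‖ ≤ L * ‖x - y‖)
    (hL : 0 ≤ L) {η σ : ℝ} (hη : 0 < η) (hLη : L * η ≤ 1) {X g : Ω → E}
    (hgradm : AEStronglyMeasurable[m] (fun ω => gradient J (X ω)) μ)
    (hgrad : MemLp (fun ω => gradient J (X ω)) 2 μ) (hg : MemLp g 2 μ)
    (hJX : Integrable (fun ω => J (X ω)) μ)
    (hJX' : Integrable (fun ω => J (X ω - η • g ω)) μ)
    (hmean : μ[g|m] =ᵐ[μ] fun ω => gradient J (X ω))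
    (hvar : ∫ ω, ‖g ω - gradient J (X ω)‖ ^ 2 ∂μ ≤ σ ^ 2) :
    ∫ ω, ‖gradient J (X ω)‖ ^ 2 ∂μ
      ≤ 2 / η * (∫ ω, J (X ω) ∂μ - ∫ ω, J (X ω - η • g ω) ∂μ) + L * η * σ ^ 2 := by
  have hinner := (integrable_inner_of_memLp_two hgrad hg).const_mul η
  have hg2 := ((memLp_two_iff_integrable_sq_norm hg.1).mp hg).const_mul (L * η ^ 2 / 2)
  have hdescent : ∫ ω, J (X ω - η • g ω) ∂μ ≤ ∫ ω, J (X ω) ∂μ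
      - η * ∫ ω, ⟪gradient J (X ω), g ω⟫ ∂μ + L * η ^ 2 / 2 * ∫ ω, ‖g ω‖ ^ 2 ∂μ := by
    have hsub : Integrable (fun ω => J (X ω) - η * ⟪gradient J (X ω), g ω⟫) μ := hJX.sub hinner
    rw [← integral_const_mul, ← integral_const_mul, ← integral_sub hJX hinner,
      ← integral_add hsub hg2]
    exact integral_mono hJX' (hsub.add hg2)
      fun ω => le_sub_inner_gradient_add_sq hJ hlip (X ω) (g ω) η
  rw [integral_inner_eq_integral_norm_sq_of_condExp_ae_eq hm hgradm hgrad hg hmean,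
    integral_norm_sq_eq_add_of_condExp_ae_eq hm hgradm hgrad hg hmean] at hdescent
  have ha : 0 ≤ ∫ ω, ‖gradient J (X ω)‖ ^ 2 ∂μ := integral_nonneg fun ω => by positivity
  rw [div_mul_eq_mul_div, ← sub_le_iff_le_add, le_div_iff₀ hη]
  nlinarith [mul_le_mul_of_nonneg_left hvar (by positivity : 0 ≤ L * η ^ 2),
    mul_le_mul_of_nonneg_left hLη (mul_nonneg hη.le ha)]

end Step

theorem one_div_mul_sum_range_le_of_le_mul_sub_add {a b : ℕ → ℝ} {k c B : ℝ} {T : ℕ}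
    (hT : 0 < T) (hk : 0 ≤ k) (hab : ∀ t ∈ Finset.range T, a t ≤ k * (b t - b (t + 1)) + c)
    (hB : B ≤ b T) :
    1 / (T : ℝ) * ∑ t ∈ Finset.range T, a t ≤ k * (b 0 - B) / T + c := by
  have hsum : ∑ t ∈ Finset.range T, a t ≤ k * (b 0 - B) + T * c :=
    calc ∑ t ∈ Finset.range T, a t
        ≤ ∑ t ∈ Finset.range T, (k * (b t - b (t + 1)) + c) := Finset.sum_le_sum hab
      _ = k * (b 0 - b T) + T * c := by
        rw [Finset.sum_add_distrib, ← Finset.mul_sum, Finset.sum_range_sub', Finset.sum_const,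
          Finset.card_range, nsmul_eq_mul]
      _ ≤ k * (b 0 - B) + T * c := by gcongr
  have hT' : (0 : ℝ) < T := by exact_mod_cast hT
  rw [one_div_mul_eq_div, div_le_iff₀ hT', add_mul, div_mul_cancel₀ _ hT'.ne']
  linarith

/-- **Average stationarity of SGD**: for an `L`-smooth objective `J` bounded below by `Jinf`,
SGD iterates `W (t+1) = W t - η • G t` with unbiased stochastic gradients of conditional
variance at most `σ²` and step size `η ∈ (0, 1/L]` satisfy, for every `T ≥ 1`,
`(1/T) Σ_{t<T} E[‖∇J(W t)‖²] ≤ 2 (E[J(W 0)] - Jinf)/(η T) + L η σ²`. -/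
theorem sgd_avg_expected_sq_grad_le
    {E : Type*} [NormedAddCommGroup E] [InnerProductSpace ℝ E] [CompleteSpace E]
    {Ω : Type*} {mΩ : MeasurableSpace Ω} {μ : Measure Ω} [IsProbabilityMeasure μ]
    (ℱ : Filtration ℕ mΩ)
    (J : E → ℝ) (L Jinf σ η : ℝ)
    (hL : 0 < L)
    (hdiff : Differentiable ℝ J)
    (hlip : ∀ x y : E, ‖gradient J x - gradient J y‖ ≤ L * ‖x - y‖)
    (hbd : ∀ x : E, Jinf ≤ J x)
    (hη : 0 < η) (hηL : η ≤ 1 / L)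
    (W G : ℕ → Ω → E)
    (hWmeas : ∀ t, StronglyMeasurable[ℱ t] (W t))
    (hrec : ∀ t ω, W (t + 1) ω = W t ω - η • G t ω)
    (hmean : ∀ t, μ[G t | ℱ t] =ᵐ[μ] fun ω => gradient J (W t ω))
    (hvar : ∀ t, ∀ᵐ ω ∂μ,
      (μ[fun ω' => ‖G t ω' - gradient J (W t ω')‖ ^ 2 | ℱ t]) ω ≤ σ ^ 2)
    (hJint : ∀ t, Integrable (fun ω => J (W t ω)) μ)
    (hGint : ∀ t, Integrable (fun ω => ‖G t ω‖ ^ 2) μ)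
    (T : ℕ) (hT : 1 ≤ T) :
    (1 / (T : ℝ)) * ∑ t ∈ Finset.range T, ∫ ω, ‖gradient J (W t ω)‖ ^ 2 ∂μ
      ≤ 2 * ((∫ ω, J (W 0 ω) ∂μ) - Jinf) / (η * T) + L * η * σ ^ 2 := by
  have hLη : L * η ≤ 1 := by rwa [le_div_iff₀ hL, mul_comm] at hηL
  have hG : ∀ t, AEStronglyMeasurable (G t) μ := fun t => by
    have hG_eq : G t = fun ω => η⁻¹ • (W t ω - W (t + 1) ω) := by
      ext ω
      rw [hrec, sub_sub_cancel, inv_smul_smul₀ hη.ne']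
    rw [hG_eq]
    exact ((((hWmeas t).mono (ℱ.le t)).sub ((hWmeas (t + 1)).mono (ℱ.le _))).const_smul _)
      |>.aestronglyMeasurable
  have hgrad : ∀ t, StronglyMeasurable[ℱ t] fun ω => gradient J (W t ω) := fun t =>
    (lipschitzWith_gradient hlip).continuous.comp_stronglyMeasurable (hWmeas t)
  have hstep : ∀ t, ∫ ω, ‖gradient J (W t ω)‖ ^ 2 ∂μ
      ≤ 2 / η * (∫ ω, J (W t ω) ∂μ - ∫ ω, J (W (t + 1) ω) ∂μ) + L * η * σ ^ 2 := fun t => by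
    simp only [hrec t]
    exact integral_norm_gradient_sq_le_of_sgd_step (ℱ.le t) hdiff hlip hL.le hη hLη
      (hgrad t).aestronglyMeasurable
      (memLp_two_gradient_comp hL hdiff hlip hbd
        ((hWmeas t).mono (ℱ.le t)).aestronglyMeasurable (hJint t))
      ((memLp_two_iff_integrable_sq_norm (hG t)).mpr (hGint t)) (hJint t)
      (by simpa only [hrec t] using hJint (t + 1))
      (hmean t) (integral_le_of_ae_condExp_le (ℱ.le t) (hvar t))
  have hJinf : Jinf ≤ ∫ ω, J (W T ω) ∂μ := by
    simpa using integral_mono (integrable_const Jinf) (hJint T) fun ω => hbd _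
  calc _ ≤ 2 / η * (∫ ω, J (W 0 ω) ∂μ - Jinf) / T + L * η * σ ^ 2 :=
        one_div_mul_sum_range_le_of_le_mul_sub_add hT (by positivity) (fun t _ => hstep t) hJinf
    _ = _ := by ring
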